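/- arXiv:1701.06732 — 7 statements merged into one kernel-verified Lean document; each statement's English description precedes it below -/
import Mathlib

section
/- Let Φ(t,s) be a nondegenerate homogeneous cubic (i.e., the matrix [[3a,2b,c],[b,2c,3d]] has rank 2), and define n₁(t,s) = (1, 0, Φ_tt, Φ_st, Φ_t) and n₂(t,s) = (0, 1, Φ_ts, Φ_ss, Φ_s) as vectors in ℝ⁵. If u ∈ ℝ⁵ satisfies u·n₁(t,s) = 0 and u·n₂(t,s) = 0 for all (t,s) ∈ ℝ², then u = 0. -/
/-!
Each orthogonality condition is a polynomial identity of degree two in `(t, s)`, so all its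
coefficients vanish. The constant terms give `u 0 = u 1 = 0`. The quadratic terms say that
`u 4` times the coefficient matrix `M = [[3a, 2b, c], [b, 2c, 3d]]` of `(Φ_t, Φ_s)` vanishes,
and the linear terms say that `(u 2, u 3)` is a left null vector of `M`. Since `M` has rank 2,
it is nonzero and its rows are linearly independent, so `u 2 = u 3 = u 4 = 0`.
-/

open Matrix

theorem Matrix.vecMul_injective_of_rank_eq_card {K m n : Type*} [Field K] [Fintype m]
    [Fintype n] {A : Matrix m n K} (h : A.rank = Fintype.card m) :
    Function.Injective A.vecMul := by
  rw [vecMul_injective_iff, linearIndependent_iff_card_eq_finrank_span, ← h,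
    rank_eq_finrank_span_row]
  rfl

theorem coeffs_eq_zero_of_forall_quadratic_eq_zero {k₀ k₁ k₂ q₁₁ q₁₂ q₂₂ : ℝ}
    (h : ∀ t s : ℝ, k₀ + k₁ * t + k₂ * s + q₁₁ * t ^ 2 + q₁₂ * t * s + q₂₂ * s ^ 2 = 0) :
    k₀ = 0 ∧ k₁ = 0 ∧ k₂ = 0 ∧ q₁₁ = 0 ∧ q₁₂ = 0 ∧ q₂₂ = 0 := by
  have h₀ := h 0 0
  have htp := h 1 0
  have htm := h (-1) 0
  have hsp := h 0 1
  have hsm := h 0 (-1)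
  have hts := h 1 1
  refine ⟨?_, ?_, ?_, ?_, ?_, ?_⟩
  · linear_combination h₀
  · linear_combination (htp - htm) / 2
  · linear_combination (hsp - hsm) / 2
  · linear_combination (htp + htm) / 2 - h₀
  · linear_combination hts - htp - hsp + h₀
  · linear_combination (hsp + hsm) / 2 - h₀

/-- if u ∈ ℝ⁵ is orthogonal to both tangent vectors
n₁(t,s) = (1,0,Φ_tt,Φ_st,Φ_t) and n₂(t,s) = (0,1,Φ_ts,Φ_ss,Φ_s) for all (t,s),
then u = 0. -/
theorem stmt4 (a b c d : ℝ)
    (hrank : (Matrix.rank !![3 * a, 2 * b, c; b, 2 * c, 3 * d]) = 2)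
    (u : Fin 5 → ℝ)
    (h1 : ∀ t s : ℝ,
      u 0 * 1 + u 1 * 0 + u 2 * (6 * a * t + 2 * b * s)
        + u 3 * (2 * b * t + 2 * c * s)
        + u 4 * (3 * a * t ^ 2 + 2 * b * t * s + c * s ^ 2) = 0)
    (h2 : ∀ t s : ℝ,
      u 0 * 0 + u 1 * 1 + u 2 * (2 * b * t + 2 * c * s)
        + u 3 * (2 * c * t + 6 * d * s)
        + u 4 * (b * t ^ 2 + 2 * c * t * s + 3 * d * s ^ 2) = 0) :
    u = 0 := by
  obtain ⟨hu0, h1t, h1s, h1tt, h1ts, h1ss⟩ := coeffs_eq_zero_of_forall_quadratic_eq_zero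
    fun t s ↦ show u 0 + (6 * a * u 2 + 2 * b * u 3) * t + (2 * b * u 2 + 2 * c * u 3) * s
        + 3 * a * u 4 * t ^ 2 + 2 * b * u 4 * t * s + c * u 4 * s ^ 2 = 0 by
      linear_combination h1 t s
  obtain ⟨hu1, -, h2s, h2tt, h2ts, h2ss⟩ := coeffs_eq_zero_of_forall_quadratic_eq_zero
    fun t s ↦ show u 1 + (2 * b * u 2 + 2 * c * u 3) * t + (2 * c * u 2 + 6 * d * u 3) * s
        + b * u 4 * t ^ 2 + 2 * c * u 4 * t * s + 3 * d * u 4 * s ^ 2 = 0 by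
      linear_combination h2 t s
  set M : Matrix (Fin 2) (Fin 3) ℝ := !![3 * a, 2 * b, c; b, 2 * c, 3 * d]
  have hM : M ≠ 0 := fun h ↦ by simp [h] at hrank
  have hMu4 : u 4 • M = 0 := by
    ext i j
    fin_cases i <;> fin_cases j <;>
      simp only [M, Matrix.smul_apply, of_apply, cons_val', cons_val, cons_val_zero, cons_val_one,
        cons_val_fin_one, Fin.isValue, Fin.zero_eta, Fin.mk_one, Fin.reduceFinMk, smul_eq_mul,
        Matrix.zero_apply] <;>
      linarith
  have hMu23 : ![u 2, u 3] ᵥ* M = 0 ᵥ* M := by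
    rw [zero_vecMul]
    ext j
    fin_cases j <;>
      simp only [M, vecMul, dotProduct, Fin.sum_univ_two, of_apply, cons_val', cons_val,
        cons_val_zero, cons_val_one, cons_val_fin_one, Fin.isValue, Fin.zero_eta, Fin.mk_one,
        Fin.reduceFinMk, Pi.zero_apply] <;>
      linarith
  have hu23 := vecMul_injective_of_rank_eq_card hrank hMu23
  have hu4 : u 4 = 0 := (smul_eq_zero.mp hMu4).resolve_right hM
  ext i
  fin_cases i
  exacts [hu0, hu1, congrFun hu23 0, congrFun hu23 1, hu4]
end

section
/- Let Φ be a nondegenerate homogeneous cubic (matrix [[3a,2b,c],[b,2c,3d]] of rank 2), and let n₁(ξ), n₂(ξ) ∈ ℝ⁵ be as in the paper (the tangent vectors of the surface (t,s,Φ_t,Φ_s,Φ)). Let u, v, w ∈ ℝ⁵ be linearly independent. Then there exists ξ ∈ ℝ² such that the 2×3 matrix whose columns are (u·n₁(ξ), u·n₂(ξ)), (v·n₁(ξ), v·n₂(ξ)), (w·n₁(ξ), w·n₂(ξ)) has rank 2. -/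
/-!
Let `K` be the kernel of the rows `u, v, w`, a plane in `ℝ⁵`. The matrix has rank below two at `ξ`
exactly when some `l n₁(ξ) + m n₂(ξ)` with `(l, m) ≠ 0` lies in `K`; this vector is
`(l, m, ∇ψ(ξ), ψ(ξ))` for the quadratic form `ψ = l Φ_t + m Φ_s`. Suppose this happens at every `ξ`.
If `K` projects onto the `(l, m)`-plane, it is the graph of a linear map `L`, and
`det (Hess Φ(ξ) - L)` vanishes identically; so does its quadratic part `det Hess Φ(ξ)`, and its
coefficients are the `2 × 2` minors of the coefficient matrix of `Φ_t, Φ_s`. Otherwise all the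
`(l, m)` are proportional to one `(l₀, m₀)`, so the values `(∇ψ(ξ), ψ(ξ))` for
`ψ = l₀ Φ_t + m₀ Φ_s` all lie on one line through `0` (their differences lie in `K` together with
`(l₀, m₀, 0, 0, 0)`), which forces `ψ = 0`. Either way `Φ_t, Φ_s` are dependent, contradicting
the rank condition.
-/

open Matrix Module

theorem Matrix.rank_eq_card_iff_linearIndependent_row {m n R : Type*} [Field R] [Fintype m]
    [Fintype n] (M : Matrix m n R) : M.rank = Fintype.card m ↔ LinearIndependent R M.row := by
  rw [rank_eq_finrank_span_row, linearIndependent_iff_card_eq_finrank_span, Set.finrank, eq_comm]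

theorem mul_sub_mul_eq_zero_of_mul_add_mul_eq_zero {R : Type*} [CommRing R] [IsDomain R]
    {a b c d l m : R} (h₁ : a * l + b * m = 0) (h₂ : c * l + d * m = 0) (hlm : l ≠ 0 ∨ m ≠ 0) :
    a * d - b * c = 0 := by
  rcases hlm with hl | hm
  · have : (a * d - b * c) * l = 0 := by linear_combination d * h₁ - b * h₂
    exact (mul_eq_zero.mp this).resolve_right hl
  · have : (a * d - b * c) * m = 0 := by linear_combination a * h₂ - c * h₁
    exact (mul_eq_zero.mp this).resolve_right hm

namespace Submodule

variable {𝕜 : Type*} [Field 𝕜]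

theorem exists_smul_add_smul_add_smul_eq_zero {V : Type*} [AddCommGroup V] [Module 𝕜 V]
    {K : Submodule 𝕜 V} [FiniteDimensional 𝕜 K] (hK : finrank 𝕜 K ≤ 2)
    {x y z : V} (hx : x ∈ K) (hy : y ∈ K) (hz : z ∈ K) :
    ∃ α β γ : 𝕜, (α ≠ 0 ∨ β ≠ 0 ∨ γ ≠ 0) ∧ α • x + β • y + γ • z = 0 := by
  have hdep : ¬LinearIndependent 𝕜 ![x, y, z] := fun hli => by
    have hle : span 𝕜 (Set.range ![x, y, z]) ≤ K := by
      rw [span_le]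
      rintro _ ⟨i, rfl⟩
      fin_cases i <;> assumption
    have := finrank_mono hle
    rw [finrank_span_eq_card hli, Fintype.card_fin] at this
    omega
  obtain ⟨g, hg, i, hi⟩ := Fintype.not_linearIndependent_iff.mp hdep
  refine ⟨g 0, g 1, g 2, ?_, by simpa [Fin.sum_univ_three] using hg⟩
  fin_cases i <;> simp_all

variable {ι : Type*} {K : Submodule 𝕜 (ι → 𝕜)} {i j : ι}

theorem exists_mem_apply_eq_of_det_ne_zero {W₁ W₂ : ι → 𝕜} (h₁ : W₁ ∈ K) (h₂ : W₂ ∈ K)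
    (hδ : W₁ i * W₂ j - W₁ j * W₂ i ≠ 0) :
    ∃ E₁ ∈ K, ∃ E₂ ∈ K, E₁ i = 1 ∧ E₁ j = 0 ∧ E₂ i = 0 ∧ E₂ j = 1 := by
  refine ⟨(W₁ i * W₂ j - W₁ j * W₂ i)⁻¹ • (W₂ j • W₁ - W₁ j • W₂), ?_,
    (W₁ i * W₂ j - W₁ j * W₂ i)⁻¹ • (W₁ i • W₂ - W₂ i • W₁), ?_, ?_, ?_, ?_, ?_⟩
  · exact K.smul_mem _ (K.sub_mem (K.smul_mem _ h₁) (K.smul_mem _ h₂))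
  · exact K.smul_mem _ (K.sub_mem (K.smul_mem _ h₂) (K.smul_mem _ h₁))
  all_goals simp only [Pi.smul_apply, Pi.sub_apply, smul_eq_mul]; field_simp <;> ring

theorem eq_zero_of_mem_of_apply_eq_zero [FiniteDimensional 𝕜 K] (hK : finrank 𝕜 K ≤ 2)
    {E₁ E₂ z : ι → 𝕜} (hE₁ : E₁ ∈ K) (hE₂ : E₂ ∈ K) (hE₁i : E₁ i = 1) (hE₁j : E₁ j = 0)
    (hE₂i : E₂ i = 0) (hE₂j : E₂ j = 1) (hz : z ∈ K) (hzi : z i = 0) (hzj : z j = 0) :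
    z = 0 := by
  obtain ⟨α, β, γ, hne, hrel⟩ := exists_smul_add_smul_add_smul_eq_zero hK hE₁ hE₂ hz
  have hα : α = 0 := by simpa [hE₁i, hE₂i, hzi] using congrFun hrel i
  have hβ : β = 0 := by simpa [hE₁j, hE₂j, hzj] using congrFun hrel j
  have hγ : γ ≠ 0 := by tauto
  simpa [hα, hβ, hγ] using hrel

end Submodule

/-- Gradient and value at `(t, s)` of the binary quadratic form
`f 0 * t ^ 2 + f 1 * t * s + f 2 * s ^ 2`. -/
def quadJet (f : Fin 3 → ℝ) (t s : ℝ) : Fin 3 → ℝ :=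
  ![2 * f 0 * t + f 1 * s, f 1 * t + 2 * f 2 * s, f 0 * t ^ 2 + f 1 * t * s + f 2 * s ^ 2]

theorem quadJet_zero_zero (f : Fin 3 → ℝ) : quadJet f 0 0 = 0 := by
  ext i
  fin_cases i <;> simp [quadJet]

theorem cross_eq_zero_of_det_quadJet_sub_eq_zero {f g : Fin 3 → ℝ} {x₁ y₁ x₂ y₂ : ℝ}
    (h : ∀ t s, (quadJet f t s 0 - x₁) * (quadJet g t s 1 - y₂) -
      (quadJet g t s 0 - x₂) * (quadJet f t s 1 - y₁) = 0) :
    f ⨯₃ g = 0 := by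
  simp only [quadJet, cons_val_zero, cons_val_one] at h
  have hquad : ∀ t s, (2 * f 0 * t + f 1 * s) * (g 1 * t + 2 * g 2 * s) -
      (2 * g 0 * t + g 1 * s) * (f 1 * t + 2 * f 2 * s) = 0 := fun t s => by
    linear_combination (h t s + h (-t) (-s)) / 2 - h 0 0
  ext i
  fin_cases i <;> simp [cross_apply]
  · linear_combination hquad 0 1 / 2
  · linear_combination (hquad 1 0 + hquad 0 1 - hquad 1 1) / 4
  · linear_combination hquad 1 0 / 2

theorem eq_zero_of_cross_quadJet_eq_zero {ψ : Fin 3 → ℝ}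
    (h : ∀ t s t' s', quadJet ψ t s ⨯₃ quadJet ψ t' s' = 0) : ψ = 0 := by
  have e₀ := congrFun (h 1 0 2 0) 1
  have e₂ := congrFun (h 0 1 0 2) 0
  have e₁ := congrFun (h 1 0 0 1) 2
  simp only [quadJet, cross_apply, cons_val_zero, cons_val_one, cons_val_two, head_cons,
    tail_cons, Pi.zero_apply] at e₀ e₁ e₂
  have h₀ : ψ 0 = 0 := pow_eq_zero_iff two_ne_zero |>.mp (by linear_combination -e₀ / 4)
  have h₂ : ψ 2 = 0 := pow_eq_zero_iff two_ne_zero |>.mp (by linear_combination e₂ / 4)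
  have h₁ : ψ 1 = 0 := pow_eq_zero_iff two_ne_zero |>.mp
    (by linear_combination -e₁ + 4 * ψ 2 * h₀)
  ext i
  fin_cases i <;> assumption

/-- When `f` and `g` are the coefficients of `Φ_t` and `Φ_s`, this is `l n₁(t, s) + m n₂(t, s)`. -/
def pencilJet (f g : Fin 3 → ℝ) (t s l m : ℝ) : Fin 5 → ℝ :=
  vecCons l (vecCons m (quadJet (l • f + m • g) t s))

section Pencil

variable {f g : Fin 3 → ℝ} {K : Submodule ℝ (Fin 5 → ℝ)}

@[simp]
theorem pencilJet_apply_zero (t s l m : ℝ) : pencilJet f g t s l m 0 = l := rfl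

@[simp]
theorem pencilJet_apply_one (t s l m : ℝ) : pencilJet f g t s l m 1 = m := rfl

theorem pencilJet_mul_mul (t s k l m : ℝ) :
    pencilJet f g t s (k * l) (k * m) = k • pencilJet f g t s l m := by
  ext i
  fin_cases i <;> simp [pencilJet, quadJet] <;> ring

theorem cross_eq_zero_of_forall_exists_pencilJet_mem (hK : finrank ℝ K ≤ 2)
    {E₁ E₂ : Fin 5 → ℝ} (hE₁ : E₁ ∈ K) (hE₂ : E₂ ∈ K) (hE₁0 : E₁ 0 = 1) (hE₁1 : E₁ 1 = 0)
    (hE₂0 : E₂ 0 = 0) (hE₂1 : E₂ 1 = 1)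
    (h : ∀ t s, ∃ l m, (l ≠ 0 ∨ m ≠ 0) ∧ pencilJet f g t s l m ∈ K) :
    f ⨯₃ g = 0 := by
  refine cross_eq_zero_of_det_quadJet_sub_eq_zero (x₁ := E₁ 2) (y₁ := E₁ 3) (x₂ := E₂ 2)
    (y₂ := E₂ 3) fun t s => ?_
  obtain ⟨l, m, hlm, hmem⟩ := h t s
  have hz : pencilJet f g t s l m - l • E₁ - m • E₂ = 0 :=
    K.eq_zero_of_mem_of_apply_eq_zero hK hE₁ hE₂ hE₁0 hE₁1 hE₂0 hE₂1
      (K.sub_mem (K.sub_mem hmem (K.smul_mem l hE₁)) (K.smul_mem m hE₂))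
      (by simp [hE₁0, hE₂0]) (by simp [hE₁1, hE₂1])
  have h₂ := congrFun hz 2
  have h₃ := congrFun hz 3
  simp only [Pi.sub_apply, Pi.smul_apply, smul_eq_mul, Pi.zero_apply] at h₂ h₃
  simp [pencilJet, quadJet] at h₂ h₃
  exact mul_sub_mul_eq_zero_of_mul_add_mul_eq_zero (l := l) (m := m)
    (by simp [quadJet]; linear_combination h₂) (by simp [quadJet]; linear_combination h₃) hlm

theorem forall_pencilJet_mem_of_forall_det_eq_zero
    (hdet : ∀ W₁ ∈ K, ∀ W₂ ∈ K, W₁ 0 * W₂ 1 - W₁ 1 * W₂ 0 = 0)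
    (h : ∀ t s, ∃ l m, (l ≠ 0 ∨ m ≠ 0) ∧ pencilJet f g t s l m ∈ K) {t₀ s₀ l₀ m₀ : ℝ}
    (h₀ : pencilJet f g t₀ s₀ l₀ m₀ ∈ K) (t s : ℝ) : pencilJet f g t s l₀ m₀ ∈ K := by
  obtain ⟨l, m, hlm, hmem⟩ := h t s
  have hprop : l₀ * m - m₀ * l = 0 := by simpa using hdet _ h₀ _ hmem
  obtain ⟨k, rfl, rfl⟩ : ∃ k, l₀ = k * l ∧ m₀ = k * m := by
    rcases hlm with hl | hm
    · exact ⟨l₀ / l, by field_simp, by field_simp; linear_combination -hprop⟩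
    · exact ⟨m₀ / m, by field_simp; linear_combination hprop, by field_simp⟩
  rw [pencilJet_mul_mul]
  exact K.smul_mem k hmem

theorem cross_quadJet_eq_zero_of_forall_pencilJet_mem (hK : finrank ℝ K ≤ 2) {l₀ m₀ : ℝ}
    (hlm : l₀ ≠ 0 ∨ m₀ ≠ 0) (h : ∀ t s, pencilJet f g t s l₀ m₀ ∈ K) (t s t' s' : ℝ) :
    quadJet (l₀ • f + m₀ • g) t s ⨯₃ quadJet (l₀ • f + m₀ • g) t' s' = 0 := by
  obtain ⟨α, β, γ, hne, hrel⟩ :=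
    K.exists_smul_add_smul_add_smul_eq_zero hK (h 0 0) (h t s) (h t' s')
  simp only [pencilJet, smul_cons, cons_add_cons, cons_eq_zero_iff, quadJet_zero_zero,
    smul_zero, zero_add, smul_eq_mul] at hrel
  obtain ⟨h0, h1, hJ⟩ := hrel
  refine not_ne_iff.mp fun hJne => ?_
  rw [crossProduct_ne_zero_iff_linearIndependent, LinearIndependent.pair_iff] at hJne
  obtain ⟨hβ, hγ⟩ := hJne β γ hJ
  have hα : α = 0 := by
    rcases hlm with hl | hm
    · have : α * l₀ = 0 := by linear_combination h0 - l₀ * hβ - l₀ * hγ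
      exact (mul_eq_zero.mp this).resolve_right hl
    · have : α * m₀ = 0 := by linear_combination h1 - m₀ * hβ - m₀ * hγ
      exact (mul_eq_zero.mp this).resolve_right hm
  simp [hα, hβ, hγ] at hne

theorem exists_forall_pencilJet_mem_eq_zero (hfg : LinearIndependent ℝ ![f, g])
    (hK : finrank ℝ K ≤ 2) :
    ∃ t s : ℝ, ∀ l m : ℝ, pencilJet f g t s l m ∈ K → l = 0 ∧ m = 0 := by
  by_contra! h
  replace h : ∀ t s, ∃ l m, (l ≠ 0 ∨ m ≠ 0) ∧ pencilJet f g t s l m ∈ K := fun t s => by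
    obtain ⟨l, m, hmem, hlm⟩ := h t s
    exact ⟨l, m, by tauto, hmem⟩
  by_cases hproj : ∃ W₁ ∈ K, ∃ W₂ ∈ K, W₁ 0 * W₂ 1 - W₁ 1 * W₂ 0 ≠ 0
  · obtain ⟨W₁, hW₁, W₂, hW₂, hδ⟩ := hproj
    obtain ⟨E₁, hE₁, E₂, hE₂, hE₁0, hE₁1, hE₂0, hE₂1⟩ :=
      K.exists_mem_apply_eq_of_det_ne_zero hW₁ hW₂ hδ
    exact crossProduct_ne_zero_iff_linearIndependent.mpr hfg
      (cross_eq_zero_of_forall_exists_pencilJet_mem hK hE₁ hE₂ hE₁0 hE₁1 hE₂0 hE₂1 h)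
  · push Not at hproj
    obtain ⟨l₀, m₀, hlm₀, h₀⟩ := h 0 0
    have hψ : l₀ • f + m₀ • g = 0 := eq_zero_of_cross_quadJet_eq_zero
      (cross_quadJet_eq_zero_of_forall_pencilJet_mem hK hlm₀
        (forall_pencilJet_mem_of_forall_det_eq_zero hproj h h₀))
    rw [LinearIndependent.pair_iff] at hfg
    have := hfg l₀ m₀ hψ
    tauto

end Pencil

/-- for linearly independent u, v, w ∈ ℝ⁵ there exists ξ = (t,s)
such that the 2×3 matrix [[u·n₁, v·n₁, w·n₁],[u·n₂, v·n₂, w·n₂]] has rank 2. -/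
theorem stmt6 (a b c d : ℝ)
    (hrank : (Matrix.rank !![3 * a, 2 * b, c; b, 2 * c, 3 * d]) = 2)
    (u v w : Fin 5 → ℝ)
    (hindep : LinearIndependent ℝ ![u, v, w]) :
    ∃ t s : ℝ,
      (Matrix.rank
        (let n1 : Fin 5 → ℝ := ![1, 0, 6 * a * t + 2 * b * s, 2 * b * t + 2 * c * s,
            3 * a * t ^ 2 + 2 * b * t * s + c * s ^ 2]
         let n2 : Fin 5 → ℝ := ![0, 1, 2 * b * t + 2 * c * s, 2 * c * t + 6 * d * s,
            b * t ^ 2 + 2 * c * t * s + 3 * d * s ^ 2]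
         !![∑ i, u i * n1 i, ∑ i, v i * n1 i, ∑ i, w i * n1 i;
            ∑ i, u i * n2 i, ∑ i, v i * n2 i, ∑ i, w i * n2 i])) = 2 := by
  set A : Matrix (Fin 3) (Fin 5) ℝ := of ![u, v, w]
  have hA : A.rank = 3 := A.rank_eq_card_iff_linearIndependent_row.mpr hindep
  have hK : finrank ℝ (LinearMap.ker A.mulVecLin) ≤ 2 := by
    have := A.mulVecLin.finrank_range_add_finrank_ker
    rw [Module.finrank_fin_fun] at this
    have : A.rank = finrank ℝ (LinearMap.range A.mulVecLin) := rfl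
    omega
  obtain ⟨t, s, hts⟩ := exists_forall_pencilJet_mem_eq_zero
    ((Matrix.rank_eq_card_iff_linearIndependent_row _).mp hrank) hK
  refine ⟨t, s, (Matrix.rank_eq_card_iff_linearIndependent_row _).mpr
    (LinearIndependent.pair_iff.mpr fun l m hlm => hts l m ?_)⟩
  rw [LinearMap.mem_ker, mulVecLin_apply, ← hlm]
  ext j
  fin_cases j <;> simp [A, pencilJet, quadJet, mulVec, dotProduct, Fin.sum_univ_five] <;> ring
end

section
/- Let Φ(t,s) = a t³ + b t² s + c t s² + d s³ and define the row vector r(t₀,s₀) = (−3at₀² − 2bt₀s₀ − cs₀², −bt₀² − 2ct₀s₀ − 3ds₀², t₀, s₀) ∈ ℝ⁴. If u ∈ ℝ⁴ is nonzero, then there exists (t₀,s₀) ∈ ℝ² such that r(t₀,s₀) and u are linearly independent. -/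
theorem LinearIndependent.pair_left_or_pair_right {K V : Type*} [Field K] [AddCommGroup V]
    [Module K V] {x y u : V} (hxy : LinearIndependent K ![x, y]) (hu : u ≠ 0) :
    LinearIndependent K ![x, u] ∨ LinearIndependent K ![y, u] := by
  simp only [linearIndependent_fin2, Matrix.cons_val_one, Matrix.cons_val_zero, ne_eq,
    hu, not_false_eq_true, true_and]
  by_contra! ⟨⟨α, hx⟩, ⟨β, hy⟩⟩
  -- `x` and `y` both lie on the line through `u`, so `β • x - α • y = 0`.
  obtain ⟨-, hα⟩ := LinearIndependent.pair_iff.1 hxy β (-α) (by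
    rw [← hx, ← hy, smul_smul, smul_smul, mul_comm, neg_mul, neg_smul, add_neg_cancel])
  exact hxy.ne_zero 0 (by simp [← hx, neg_eq_zero.1 hα])

/-- for u ∈ ℝ⁴ nonzero there exists (t₀,s₀) such that
r(t₀,s₀) = (−3at₀²−2bt₀s₀−cs₀², −bt₀²−2ct₀s₀−3ds₀², t₀, s₀) and u
are linearly independent. -/
theorem stmt8 (a b c d : ℝ) (u : Fin 4 → ℝ) (hu : u ≠ 0) :
    ∃ t₀ s₀ : ℝ,
      LinearIndependent ℝ
        ![(![-(3 * a * t₀ ^ 2) - 2 * b * t₀ * s₀ - c * s₀ ^ 2,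
            -(b * t₀ ^ 2) - 2 * c * t₀ * s₀ - 3 * d * s₀ ^ 2, t₀, s₀] : Fin 4 → ℝ),
          u] := by
  set r : ℝ → ℝ → Fin 4 → ℝ := fun t₀ s₀ =>
    ![-(3 * a * t₀ ^ 2) - 2 * b * t₀ * s₀ - c * s₀ ^ 2,
      -(b * t₀ ^ 2) - 2 * c * t₀ * s₀ - 3 * d * s₀ ^ 2, t₀, s₀]
  -- The last two coordinates of `r t₀ s₀` are `(t₀, s₀)`.
  have hr : LinearIndependent ℝ ![r 1 0, r 0 1] := by
    refine LinearIndependent.pair_iff.2 fun p q hpq => ⟨?_, ?_⟩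
    · simpa [r] using congrFun hpq 2
    · simpa [r] using congrFun hpq 3
  rcases hr.pair_left_or_pair_right hu with h | h
  exacts [⟨1, 0, h⟩, ⟨0, 1, h⟩]
end

section
/- Let Φ(t,s) = a t³ + b t² s + c t s² + d s³ be nondegenerate (matrix [[3a,2b,c],[b,2c,3d]] of rank 2), and define r(t₀,s₀) = (−3at₀² − 2bt₀s₀ − cs₀², −bt₀² − 2ct₀s₀ − 3ds₀², t₀, s₀) ∈ ℝ⁴. If u, v ∈ ℝ⁴ are linearly independent, then there exists (t₀,s₀) ∈ ℝ² such that the 3×4 matrix with rows r(t₀,s₀), u, v has rank 3. -/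
/-! If the rank were never 3, every `r(t, s)` would lie in the plane `W = span {u, v}`. The odd
part `(r(t, s) - r(-t, -s)) / 2 = (0, 0, t, s)` already spans a plane, so `W` is that plane and
the first two coordinates of `r` vanish identically; this forces `Φ = 0`, contradicting the
rank condition. -/

open Module Submodule

theorem Matrix.rank_of_cons_eq_of_notMem_span {K m : Type*} [Field K] [Fintype m] {n : ℕ}
    {f : Fin n → m → K} (hf : LinearIndependent K f) {x : m → K}
    (hx : x ∉ span K (Set.range f)) :
    (Matrix.of (Fin.cons x f : Fin (n + 1) → m → K)).rank = n + 1 :=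
  (linearIndependent_finCons.2 ⟨hf, hx⟩).rank_matrix.trans (Fintype.card_fin _)

/-- `r(t, s) = (-∂Φ/∂t, -∂Φ/∂s, t, s)` for `Φ = a t³ + b t² s + c t s² + d s³`. -/
def gradRow (a b c d t s : ℝ) : Fin 4 → ℝ :=
  ![-(3 * a * t ^ 2) - 2 * b * t * s - c * s ^ 2,
    -(b * t ^ 2) - 2 * c * t * s - 3 * d * s ^ 2, t, s]

theorem gradRow_sub_gradRow_neg (a b c d t s : ℝ) :
    (2⁻¹ : ℝ) • (gradRow a b c d t s - gradRow a b c d (-t) (-s)) = ![0, 0, t, s] := by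
  ext i; fin_cases i <;> simp [gradRow] <;> ring

theorem eq_zero_of_gradRow_mem {a b c d : ℝ} {W : Submodule ℝ (Fin 4 → ℝ)}
    (hW : finrank ℝ W ≤ 2) (hr : ∀ t s, gradRow a b c d t s ∈ W) :
    a = 0 ∧ b = 0 ∧ c = 0 ∧ d = 0 := by
  set e : Fin 2 → Fin 4 → ℝ := ![![0, 0, 1, 0], ![0, 0, 0, 1]]
  have he : LinearIndependent ℝ e := by
    refine LinearIndependent.pair_iff.2 fun α β h => ⟨?_, ?_⟩
    · simpa [e] using congrFun h 2
    · simpa [e] using congrFun h 3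
  have hodd : ∀ t s, (![0, 0, t, s] : Fin 4 → ℝ) ∈ W := fun t s => by
    rw [← gradRow_sub_gradRow_neg a b c d]
    exact W.smul_mem _ (W.sub_mem (hr t s) (hr (-t) (-s)))
  have hspan : span ℝ (Set.range e) = W := by
    refine eq_of_le_of_finrank_le (span_le.2 (Set.range_subset_iff.2 fun i => ?_)) ?_
    · fin_cases i
      exacts [hodd 1 0, hodd 0 1]
    · rwa [finrank_span_eq_card he, Fintype.card_fin]
  have hcoord : ∀ x ∈ W, x 0 = 0 ∧ x 1 = 0 := by
    intro x hx
    obtain ⟨k, rfl⟩ := (mem_span_range_iff_exists_fun ℝ).1 (hspan ▸ hx)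
    simp [e, Fin.sum_univ_two]
  obtain ⟨ha, hb⟩ := hcoord _ (hr 1 0)
  obtain ⟨hc, hd⟩ := hcoord _ (hr 0 1)
  simp [gradRow] at ha hb hc hd
  exact ⟨ha, hb, hc, hd⟩

/-- for nondegenerate Φ and linearly independent u, v ∈ ℝ⁴,
there exists (t₀,s₀) such that the 3×4 matrix with rows r(t₀,s₀), u, v has rank 3. -/
theorem stmt9 (a b c d : ℝ)
    (hrank : (Matrix.rank !![3 * a, 2 * b, c; b, 2 * c, 3 * d]) = 2)
    (u v : Fin 4 → ℝ)
    (hindep : LinearIndependent ℝ ![u, v]) :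
    ∃ t₀ s₀ : ℝ,
      (Matrix.rank (Matrix.of
        ![(![-(3 * a * t₀ ^ 2) - 2 * b * t₀ * s₀ - c * s₀ ^ 2,
            -(b * t₀ ^ 2) - 2 * c * t₀ * s₀ - 3 * d * s₀ ^ 2, t₀, s₀] : Fin 4 → ℝ),
          u, v])) = 3 := by
  by_contra! h
  have hr : ∀ t s, gradRow a b c d t s ∈ span ℝ (Set.range ![u, v]) := fun t s => by
    by_contra hx
    exact h t s (Matrix.rank_of_cons_eq_of_notMem_span hindep hx)
  obtain ⟨rfl, rfl, rfl, rfl⟩ :=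
    eq_zero_of_gradRow_mem ((finrank_range_le_card _).trans (by simp)) hr
  have hzero : !![3 * (0 : ℝ), 2 * 0, 0; 0, 2 * 0, 3 * 0] = 0 := by
    ext i j; fin_cases i <;> fin_cases j <;> simp
  rw [hzero, Matrix.rank_zero] at hrank
  exact two_ne_zero hrank.symm
end

section
/- Let Φ(t,s) = a t³ + b t² s + c t s² + d s³ be nondegenerate (matrix [[3a,2b,c],[b,2c,3d]] of rank 2), and define r(t₀,s₀) = (−3at₀² − 2bt₀s₀ − cs₀², −bt₀² − 2ct₀s₀ − 3ds₀², t₀, s₀) ∈ ℝ⁴. If u, v, w ∈ ℝ⁴ are linearly independent, then the determinant of the 4×4 matrix with rows r(t₀,s₀), u, v, w is not identically zero as a polynomial in (t₀,s₀). -/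
/-!
Expanding along the first row, `det (r(t, s); u, v, w) = r(t, s) ⬝ᵥ q` for the cofactor vector
`q` of `u, v, w`, and `q ≠ 0` because independent `u, v, w` extend to a basis of `ℝ⁴`. If
`r(t, s) ⬝ᵥ q` vanished identically, its coefficients of `t`, `s` would give `q₂ = q₃ = 0`, and
those of `t²`, `ts`, `s²` would say that `(q₀, q₁)` is annihilated by the coefficient matrix of
`∇Φ`, whose rows are independent; so `q = 0`.
-/

namespace Matrix

theorem det_of_vecCons_eq_dotProduct {R : Type*} [CommRing R] {n : ℕ} (x : Fin (n + 1) → R)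
    (B : Fin n → Fin (n + 1) → R) :
    det (of (vecCons x B)) =
      x ⬝ᵥ fun j => (-1) ^ (j : ℕ) * det ((of B).submatrix id j.succAbove) := by
  rw [det_succ_row_zero]
  simp only [dotProduct]
  congr! 1 with j
  simp only [of_apply, cons_val_zero]
  rw [mul_assoc, mul_left_comm]
  rfl

theorem exists_det_of_vecCons_ne_zero {K : Type*} [Field K] {n : ℕ}
    {B : Fin n → Fin (n + 1) → K} (hB : LinearIndependent K B) :
    ∃ x, det (of (vecCons x B)) ≠ 0 := by
  obtain ⟨x, hx⟩ := exists_linearIndependent_cons_of_lt_finrank hB (by simp)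
  exact ⟨x, ((isUnit_iff_isUnit_det _).mp (linearIndependent_rows_iff_isUnit.mp hx)).ne_zero⟩

theorem eq_zero_of_vecMul_eq_zero_of_rank_eq_card {K m n : Type*} [Field K] [Fintype m]
    [Fintype n] {M : Matrix m n K} (hM : M.rank = Fintype.card m) {y : m → K}
    (hy : y ᵥ* M = 0) : y = 0 := by
  have hrows : LinearIndependent K M.row := by
    rw [linearIndependent_iff_card_eq_finrank_span, ← hM, rank_eq_finrank_span_row]
    rfl
  exact funext <| Fintype.linearIndependent_iff.mp hrows y (by rwa [vecMul_eq_sum] at hy)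

end Matrix

open Matrix

section CubicForm

variable {K : Type*} [Field K] [CharZero K] (a b c d : K)

/-- `(-∂ₜΦ, -∂ₛΦ, t, s)` for `Φ(t, s) = a t³ + b t² s + c t s² + d s³`. -/
def cubicGradientRow (t s : K) : Fin 4 → K :=
  ![-(3 * a * t ^ 2) - 2 * b * t * s - c * s ^ 2,
    -(b * t ^ 2) - 2 * c * t * s - 3 * d * s ^ 2, t, s]

variable {a b c d}

theorem eq_zero_of_forall_cubicGradientRow_dotProduct_eq_zero
    (hrank : (!![3 * a, 2 * b, c; b, 2 * c, 3 * d]).rank = 2) {q : Fin 4 → K}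
    (hq : ∀ t s, cubicGradientRow a b c d t s ⬝ᵥ q = 0) : q = 0 := by
  have h : ∀ t s : K, (-(3 * a * t ^ 2) - 2 * b * t * s - c * s ^ 2) * q 0 +
      (-(b * t ^ 2) - 2 * c * t * s - 3 * d * s ^ 2) * q 1 + t * q 2 + s * q 3 = 0 := by
    intro t s
    simpa [cubicGradientRow, dotProduct, Fin.sum_univ_four, add_assoc] using hq t s
  have hq2 : q 2 = 0 := by linear_combination (h 1 0 - h (-1) 0) / 2
  have hq3 : q 3 = 0 := by linear_combination (h 0 1 - h 0 (-1)) / 2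
  have hq01 : ![q 0, q 1] = 0 := by
    refine eq_zero_of_vecMul_eq_zero_of_rank_eq_card (by simpa using hrank) ?_
    ext j
    fin_cases j <;>
      simp only [vecMul, dotProduct, Fin.sum_univ_two, of_apply, cons_val', cons_val,
        cons_val_zero, cons_val_one, cons_val_fin_one, Fin.isValue, Fin.zero_eta, Fin.mk_one,
        Fin.reduceFinMk, Pi.zero_apply]
    · linear_combination (-(h 1 0) - h (-1) 0) / 2
    · linear_combination (h (-1) 1 - h 1 1 + 2 * hq2) / 2
    · linear_combination (-(h 0 1) - h 0 (-1)) / 2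
  ext i
  fin_cases i
  · exact congrFun hq01 0
  · exact congrFun hq01 1
  · exact hq2
  · exact hq3

end CubicForm

/-- for nondegenerate Φ and linearly independent u, v, w ∈ ℝ⁴,
the determinant of the 4×4 matrix with rows r(t₀,s₀), u, v, w is not identically
zero as a polynomial in (t₀,s₀). -/
theorem stmt10 (a b c d : ℝ)
    (hrank : (Matrix.rank !![3 * a, 2 * b, c; b, 2 * c, 3 * d]) = 2)
    (u v w : Fin 4 → ℝ)
    (hindep : LinearIndependent ℝ ![u, v, w]) :
    ∃ t₀ s₀ : ℝ,
      (Matrix.det (Matrix.of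
        ![(![-(3 * a * t₀ ^ 2) - 2 * b * t₀ * s₀ - c * s₀ ^ 2,
            -(b * t₀ ^ 2) - 2 * c * t₀ * s₀ - 3 * d * s₀ ^ 2, t₀, s₀] : Fin 4 → ℝ),
          u, v, w])) ≠ 0 := by
  obtain ⟨x, hx⟩ := exists_det_of_vecCons_ne_zero hindep
  by_contra! hdet
  simp only [det_of_vecCons_eq_dotProduct] at hx hdet
  have hcofactor := eq_zero_of_forall_cubicGradientRow_dotProduct_eq_zero hrank hdet
  exact hx (by rw [hcofactor, dotProduct_zero])
end

section
/- With the same definitions of α₁, α₂, β₂, b_i, τ_i as functions of p (for p near 9), the infinite series Σ_{j=0}^∞ b_j τ_j converges and equals (75 − 25p + 2p²)/(15 − 10p + p²). -/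
/-- the geometric series Σ b_j τ_j converges to
(75 − 25p + 2p²)/(15 − 10p + p²). -/
theorem stmt14 (p α₁ α₂ β₂ : ℝ)
    (hp : 5 < p)
    (hden : 15 - 10 * p + p ^ 2 ≠ 0)
    (hα₁ : 5 / (2 * p) = α₁ * 5 / (4 * p) + (1 - α₁) / 2)
    (hα₂ : 5 / (4 * p) = α₂ / p + (1 - α₂) / 6)
    (hβ₂ : 1 / 6 = (1 - β₂) / 2 + β₂ * 5 / (4 * p))
    (hratio : |(3 / 2 : ℝ) * ((1 - α₂) * β₂)| < 1) :
    HasSum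
      (fun j : ℕ =>
        (2 * (3 / 2 : ℝ) ^ j) * (α₁ * α₂ * ((1 - α₂) * β₂) ^ j))
      ((75 - 25 * p + 2 * p ^ 2) / (15 - 10 * p + p ^ 2)) := by
  have hp0 : p ≠ 0 := by linarith
  have h5 : 2 * p - 5 ≠ 0 := by nlinarith
  have h15 : 6 * p - 15 ≠ 0 := by nlinarith
  have e1 : α₁ * (2 * p - 5) = 2 * p - 10 := by
    field_simp at hα₁; nlinarith [hα₁]
  have e2 : α₂ * (2 * p - 12) = 2 * p - 15 := by
    field_simp at hα₂; nlinarith [hα₂]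
  have e3 : β₂ * (6 * p - 15) = 4 * p := by
    field_simp at hβ₂; nlinarith [hβ₂]
  have hp6 : 2 * p - 12 ≠ 0 := by
    intro h
    rw [h, mul_zero] at e2
    nlinarith [e2]
  set r : ℝ := (3 / 2 : ℝ) * ((1 - α₂) * β₂) with hr
  have hr_val : r = 6 * p / ((2 * p - 12) * (2 * p - 5)) := by
    have hα₂v : α₂ = (2 * p - 15) / (2 * p - 12) := by
      field_simp; linarith [e2]
    have hβ₂v : β₂ = 4 * p / (6 * p - 15) := by
      rw [eq_div_iff h15]; linarith [e3]
    rw [hr, hα₂v, hβ₂v]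
    rw [eq_div_iff (mul_ne_zero hp6 h5)]
    rw [show 6 * p - 15 = 3 * (2 * p - 5) by ring]
    field_simp
    ring
  have h1r : 1 - r = 4 * (15 - 10 * p + p ^ 2) / ((2 * p - 12) * (2 * p - 5)) := by
    rw [hr_val, eq_div_iff (mul_ne_zero hp6 h5), sub_mul, div_mul_cancel₀ _ (mul_ne_zero hp6 h5)]
    ring
  have h1r0 : 1 - r ≠ 0 := by
    rw [h1r]
    exact div_ne_zero (by simpa using hden) (mul_ne_zero hp6 h5)
  have hgeo := (hasSum_geometric_of_abs_lt_one (r := r) (by simpa [hr] using hratio)).mul_left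
    (2 * (α₁ * α₂))
  have heq : (fun j : ℕ =>
      (2 * (3 / 2 : ℝ) ^ j) * (α₁ * α₂ * ((1 - α₂) * β₂) ^ j)) =
      fun j : ℕ => 2 * (α₁ * α₂) * r ^ j := by
    funext j
    simp only [hr, mul_pow]
    ring
  rw [heq]
  convert hgeo using 1
  · rfl
  rw [h1r]
  have hα₁v : α₁ = (2 * p - 10) / (2 * p - 5) := by
    field_simp; linarith [e1]
  have hα₂v : α₂ = (2 * p - 15) / (2 * p - 12) := by
    field_simp; linarith [e2]
  rw [hα₁v, hα₂v]
  rw [inv_div, div_mul_div_comm, mul_div_assoc', div_eq_div_iff hden (mul_ne_zero four_ne_zero hden),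
    mul_div_assoc', div_mul_eq_mul_div, div_mul_eq_mul_div, eq_div_iff (mul_ne_zero h5 hp6)]
  ring
end

section
/- Let Φ(t,s) = a t³ + b t² s + c t s² + d s³ be nondegenerate (matrix [[3a,2b,c],[b,2c,3d]] of rank 2) and let u, v ∈ ℝ⁵. Suppose that the determinant of the 2×2 matrix [[u₁ + u₃Φ_tt + u₄Φ_st + u₅Φ_t, v₁ + v₃Φ_tt + v₄Φ_st + v₅Φ_t],[u₂ + u₃Φ_ts + u₄Φ_ss + u₅Φ_s, v₂ + v₃Φ_ts + v₄Φ_ss + v₅Φ_s]] vanishes identically as a polynomial in (t,s). Then the 2×2 minors d₃₅ = u₃v₅ − u₅v₃ and d₄₅ = u₄v₅ − u₅v₄ both vanish, and d₁₂ = u₁v₂ − u₂v₁ = 0. -/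
/-!
The part of degree 3 of the determinant factors as `(d₃₅ s - d₄₅ t) · G(t, s)`, where
`G = p t² + 2 q t s + r s²` is half the Hessian determinant of `Φ` and `p, q, r` are the `2 × 2`
minors of the matrix `[[3a, 2b, c], [b, 2c, 3d]]`. Nondegeneracy says `G ≠ 0`, so the linear
factor vanishes, i.e. `d₃₅ = d₄₅ = 0`; the constant term of the determinant is `d₁₂`.
-/

open Matrix

theorem Matrix.cross_row_ne_zero_of_rank_eq_two {K : Type*} [Field K]
    {A : Matrix (Fin 2) (Fin 3) K} (hA : A.rank = 2) : A 0 ⨯₃ A 1 ≠ 0 := by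
  have hrows : ![A 0, A 1] = A.row := by ext i; fin_cases i <;> rfl
  rw [crossProduct_ne_zero_iff_linearIndependent, hrows,
    linearIndependent_iff_card_eq_finrank_span, Set.finrank, ← rank_eq_finrank_span_row, hA,
    Fintype.card_fin]

section BinaryForms

variable {K : Type*} [Field K] [NeZero (2 : K)]

theorem coeffs_eq_zero_of_forall_cubic_form_eq_zero {e₀ e₁ e₂ e₃ : K}
    (h : ∀ t s : K, e₃ * t ^ 3 + e₂ * t ^ 2 * s + e₁ * t * s ^ 2 + e₀ * s ^ 3 = 0) :
    e₃ = 0 ∧ e₂ = 0 ∧ e₁ = 0 ∧ e₀ = 0 := by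
  have h₃ : e₃ = 0 := by simpa using h 1 0
  have h₀ : e₀ = 0 := by simpa using h 0 1
  have h₁ : e₁ = 0 := by
    have : 2 * e₁ = 0 := by linear_combination h 1 1 + h 1 (-1) - 2 * h₃
    simpa [two_ne_zero] using this
  exact ⟨h₃, by linear_combination h 1 1 - h₃ - h₁ - h₀, h₁, h₀⟩

theorem eq_zero_of_forall_linear_mul_quadratic_eq_zero {x y p q r : K}
    (hG : p ≠ 0 ∨ q ≠ 0 ∨ r ≠ 0)
    (h : ∀ t s : K, (x * s - y * t) * (p * t ^ 2 + 2 * q * t * s + r * s ^ 2) = 0) :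
    x = 0 ∧ y = 0 := by
  obtain ⟨h₃, h₂, h₁, h₀⟩ := coeffs_eq_zero_of_forall_cubic_form_eq_zero
    (e₃ := -(y * p)) (e₂ := x * p - 2 * q * y) (e₁ := 2 * q * x - r * y) (e₀ := x * r)
    fun t s => by linear_combination h t s
  rcases hG with hp | hq | hr
  · have hy : y = 0 := by simpa [hp] using h₃
    exact ⟨by simpa [hy, hp] using h₂, hy⟩
  · have hx : x = 0 := by
      have : 2 * q * x ^ 2 = 0 := by linear_combination x * h₁ + y * h₀
      simpa [hq, two_ne_zero] using this
    exact ⟨hx, by simpa [hx, hq, two_ne_zero] using h₂⟩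
  · have hx : x = 0 := by simpa [hr] using h₀
    exact ⟨hx, by simpa [hx, hr] using h₁⟩

end BinaryForms

/-- if the determinant of the 2×2 matrix built from u and v and
the derivatives of a nondegenerate cubic Φ vanishes identically in (t,s), then
the minors d₃₅, d₄₅ and d₁₂ all vanish. -/
theorem stmt17 (a b c d : ℝ)
    (hrank : (Matrix.rank !![3 * a, 2 * b, c; b, 2 * c, 3 * d]) = 2)
    (u₁ u₂ u₃ u₄ u₅ v₁ v₂ v₃ v₄ v₅ : ℝ)
    (hdet : ∀ t s : ℝ,
      Matrix.det
        !![u₁ + u₃ * (6 * a * t + 2 * b * s) + u₄ * (2 * b * t + 2 * c * s)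
             + u₅ * (3 * a * t ^ 2 + 2 * b * t * s + c * s ^ 2),
           v₁ + v₃ * (6 * a * t + 2 * b * s) + v₄ * (2 * b * t + 2 * c * s)
             + v₅ * (3 * a * t ^ 2 + 2 * b * t * s + c * s ^ 2);
           u₂ + u₃ * (2 * b * t + 2 * c * s) + u₄ * (2 * c * t + 6 * d * s)
             + u₅ * (b * t ^ 2 + 2 * c * t * s + 3 * d * s ^ 2),
           v₂ + v₃ * (2 * b * t + 2 * c * s) + v₄ * (2 * c * t + 6 * d * s)
             + v₅ * (b * t ^ 2 + 2 * c * t * s + 3 * d * s ^ 2)] = 0) :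
    u₃ * v₅ - u₅ * v₃ = 0 ∧ u₄ * v₅ - u₅ * v₄ = 0 ∧ u₁ * v₂ - u₂ * v₁ = 0 := by
  simp only [Matrix.det_fin_two_of] at hdet
  have hminor : 6 * a * c - 2 * b ^ 2 ≠ 0 ∨ 9 * a * d - b * c ≠ 0 ∨ 6 * b * d - 2 * c ^ 2 ≠ 0 := by
    have hcross := Matrix.cross_row_ne_zero_of_rank_eq_two hrank
    contrapose! hcross
    obtain ⟨hp, hq, hr⟩ := hcross
    rw [cross_apply]
    simp only [of_apply, cons_val', cons_val_zero, cons_val_one, cons_val_fin_one, cons_val,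
      cons_eq_zero_iff, zero_empty, and_true]
    exact ⟨by linear_combination hr, by linear_combination -hq, by linear_combination hp⟩
  -- The third finite difference along the ray through `(t, s)` isolates the cubic part.
  have hcubic : ∀ t s : ℝ, ((u₃ * v₅ - u₅ * v₃) * s - (u₄ * v₅ - u₅ * v₄) * t) *
      ((6 * a * c - 2 * b ^ 2) * t ^ 2 + 2 * (9 * a * d - b * c) * t * s
        + (6 * b * d - 2 * c ^ 2) * s ^ 2) = 0 := fun t s => by
    linear_combination
      (hdet (3 * t) (3 * s) - 3 * hdet (2 * t) (2 * s) + 3 * hdet t s - hdet 0 0) / 6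
  obtain ⟨h₃₅, h₄₅⟩ := eq_zero_of_forall_linear_mul_quadratic_eq_zero hminor hcubic
  exact ⟨h₃₅, h₄₅, by linear_combination hdet 0 0⟩
end
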